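/- arXiv:2603.09522 — 3 statements merged into one kernel-verified Lean document; each statement's English description precedes it below -/
import Mathlib

section
/- The integral over ξ from 0 to ∞ of (Re ψ(1+iξ) + γ)/(1+ξ²) dξ equals π/2. -/
open Complex Real MeasureTheory

/-- The digamma function `ψ = Γ'/Γ`. -/
noncomputable def digamma (z : ℂ) : ℂ := deriv Complex.Gamma z / Complex.Gamma z

namespace DG

local notation "γ" => Real.eulerMascheroniConstant

noncomputable def g (n : ℕ) (z : ℂ) : ℂ := z / ((n : ℂ) + 1) - Complex.log (1 + z / ((n : ℂ) + 1))

noncomputable def g' (n : ℕ) (z : ℂ) : ℂ := ((n : ℂ) + 1)⁻¹ - (((n : ℂ) + 1) + z)⁻¹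

lemma norm_nat_add_one_le {n : ℕ} {z : ℂ} (hz : 0 ≤ z.re) :
    (n + 1 : ℝ) ≤ ‖((n : ℂ) + 1) + z‖ := by
  have h : (n + 1 : ℝ) ≤ (((n : ℂ) + 1) + z).re := by
    simp only [Complex.add_re, Complex.natCast_re, Complex.one_re]; linarith
  exact h.trans (Complex.re_le_norm _)

lemma nat_add_one_ne_zero (n : ℕ) : ((n : ℂ) + 1) ≠ 0 := by
  have := Nat.cast_add_one_ne_zero (R := ℂ) n
  push_cast at this ⊢
  exact this

lemma nat_add_one_add_ne_zero {n : ℕ} {z : ℂ} (hz : 0 ≤ z.re) : ((n : ℂ) + 1) + z ≠ 0 := by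
  intro h
  have := norm_nat_add_one_le (n := n) hz
  rw [h, norm_zero] at this
  have : (0:ℝ) < n + 1 := by positivity
  linarith

lemma g'_eq (n : ℕ) {z : ℂ} (hz : 0 ≤ z.re) :
    g' n z = z / (((n : ℂ) + 1) * (((n : ℂ) + 1) + z)) := by
  rw [g']
  field_simp [nat_add_one_ne_zero n, nat_add_one_add_ne_zero hz]
  ring

lemma norm_g'_le (n : ℕ) {z : ℂ} (hz : 0 ≤ z.re) :
    ‖g' n z‖ ≤ ‖z‖ / ((n : ℝ) + 1) ^ 2 := by
  rw [g'_eq n hz, norm_div, norm_mul]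
  have h1 : ‖((n : ℂ) + 1)‖ = (n : ℝ) + 1 := by
    rw [show ((n : ℂ) + 1) = ((n + 1 : ℕ) : ℂ) by push_cast; ring, Complex.norm_natCast]
    push_cast; ring
  have h2 := norm_nat_add_one_le (n := n) hz
  have hn : (0:ℝ) < (n : ℝ) + 1 := by positivity
  rw [h1]
  rcases eq_or_ne z 0 with rfl | hz0
  · simp
  · have hznorm : (0:ℝ) < ‖z‖ := norm_pos_iff.mpr hz0
    have hd : (0:ℝ) < ((n:ℝ)+1) * ‖(↑n + 1) + z‖ := by
      apply mul_pos hn (lt_of_lt_of_le hn h2)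
    rw [div_le_div_iff₀ hd (by positivity)]
    have : ((n:ℝ) + 1) * ((n:ℝ)+1) ≤ ((n:ℝ) + 1) * ‖(↑n + 1) + z‖ := by
      exact mul_le_mul_of_nonneg_left h2 (le_of_lt hn)
    calc ‖z‖ * ((n:ℝ)+1)^2 = (((n:ℝ)+1) * ((n:ℝ)+1)) * ‖z‖ := by ring
    _ ≤ (((n:ℝ) + 1) * ‖(↑n + 1) + z‖) * ‖z‖ := by
        exact mul_le_mul_of_nonneg_right this (le_of_lt hznorm)
    _ = ‖z‖ * (((n:ℝ) + 1) * ‖(↑n + 1) + z‖) := by ring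

lemma summable_g' {z : ℂ} (hz : 0 ≤ z.re) : Summable (fun n => g' n z) := by
  apply Summable.of_norm_bounded (g := fun n : ℕ => ‖z‖ / ((n : ℝ) + 1) ^ 2)
  · simp_rw [div_eq_mul_inv]
    apply Summable.mul_left
    have h0 : Summable (fun n : ℕ => ((n : ℝ) ^ 2)⁻¹) := Real.summable_nat_pow_inv.mpr one_lt_two
    have := (summable_nat_add_iff (f := fun n : ℕ => ((n : ℝ) ^ 2)⁻¹) 1).mpr h0
    apply this.congr
    intro n; push_cast; ring
  · exact fun n => norm_g'_le n hz


lemma re_one_add_div {n : ℕ} {z : ℂ} (hz : 0 < z.re) : 0 < (1 + z / ((n : ℂ) + 1)).re := by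
  have h : ((n : ℂ) + 1) = ((n + 1 : ℝ) : ℂ) := by push_cast; ring
  rw [h, Complex.add_re, Complex.one_re, Complex.div_ofReal_re]
  positivity

lemma one_add_div_slitPlane {n : ℕ} {z : ℂ} (hz : 0 < z.re) :
    (1 + z / ((n : ℂ) + 1)) ∈ Complex.slitPlane := Or.inl (re_one_add_div hz)

lemma norm_g_le (n : ℕ) {z : ℂ} (h : ‖z‖ ≤ ((n:ℝ)+1)/2) : ‖g n z‖ ≤ ‖z‖^2 / ((n:ℝ)+1)^2 := by
  have hn : (0:ℝ) < (n:ℝ)+1 := by positivity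
  have hw : ‖z / ((n:ℂ)+1)‖ ≤ 1/2 := by
    rw [norm_div, show ‖((n:ℂ)+1)‖ = (n:ℝ)+1 by
      rw [show ((n : ℂ) + 1) = ((n + 1 : ℕ) : ℂ) by push_cast; ring, Complex.norm_natCast]
      push_cast; ring]
    rw [div_le_iff₀ hn]
    linarith
  have hw1 : ‖z / ((n:ℂ)+1)‖ < 1 := lt_of_le_of_lt hw (by norm_num)
  have hb := Complex.norm_log_one_add_sub_self_le hw1
  rw [g, ← norm_neg]
  have : -(z / (↑n + 1) - Complex.log (1 + z / (↑n + 1)))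
      = Complex.log (1 + z / (↑n + 1)) - z / (↑n + 1) := by ring
  rw [this]
  refine hb.trans ?_
  have h2 : (1 - ‖z / ((n:ℂ)+1)‖)⁻¹ ≤ 2 := by
    rw [inv_le_comm₀ (by linarith) (by norm_num)]
    linarith
  have h3 : ‖z / ((n:ℂ)+1)‖^2 = ‖z‖^2/((n:ℝ)+1)^2 := by
    rw [norm_div, show ‖((n:ℂ)+1)‖ = (n:ℝ)+1 by
      rw [show ((n : ℂ) + 1) = ((n + 1 : ℕ) : ℂ) by push_cast; ring, Complex.norm_natCast]
      push_cast; ring, div_pow]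
  calc ‖z / (↑n + 1)‖ ^ 2 * (1 - ‖z / (↑n + 1)‖)⁻¹ / 2
      ≤ ‖z / (↑n + 1)‖ ^ 2 * 2 / 2 := by
        apply div_le_div_of_nonneg_right ?_ (by norm_num)
        exact mul_le_mul_of_nonneg_left h2 (by positivity)
    _ = ‖z / (↑n + 1)‖ ^ 2 := by ring
    _ = ‖z‖^2/((n:ℝ)+1)^2 := h3

lemma summable_g (z : ℂ) : Summable (fun n => g n z) := by
  apply Summable.of_norm_bounded_eventually_nat (g := fun n : ℕ => ‖z‖^2 / ((n : ℝ) + 1) ^ 2)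
  · simp_rw [div_eq_mul_inv]
    apply Summable.mul_left
    have h0 : Summable (fun n : ℕ => ((n : ℝ) ^ 2)⁻¹) := Real.summable_nat_pow_inv.mpr one_lt_two
    have := (summable_nat_add_iff (f := fun n : ℕ => ((n : ℝ) ^ 2)⁻¹) 1).mpr h0
    apply this.congr
    intro n; push_cast; ring
  · have : ∀ᶠ n : ℕ in Filter.atTop, ‖z‖ ≤ ((n:ℝ)+1)/2 := by
      filter_upwards [Filter.eventually_ge_atTop (Nat.ceil (2 * ‖z‖))] with n hn
      have : (2:ℝ) * ‖z‖ ≤ n := by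
        calc (2:ℝ) * ‖z‖ ≤ Nat.ceil (2*‖z‖) := Nat.le_ceil _
        _ ≤ n := by exact_mod_cast hn
      linarith
    filter_upwards [this] with n hn
    exact norm_g_le n hn

lemma hasDerivAt_g (n : ℕ) {z : ℂ} (hz : 0 < z.re) : HasDerivAt (g n) (g' n z) z := by
  have h1 : HasDerivAt (fun w : ℂ => w / ((n : ℂ) + 1)) (((n : ℂ) + 1)⁻¹) z := by
    simpa using (hasDerivAt_id z).div_const ((n : ℂ) + 1)
  have h2 : HasDerivAt (fun w : ℂ => 1 + w / ((n : ℂ) + 1)) (((n : ℂ) + 1)⁻¹) z :=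
    h1.const_add 1
  have h3 := h2.clog (one_add_div_slitPlane hz)
  have h4 := h1.sub h3
  refine h4.congr_deriv (Eq.symm ?_)
  rw [g']
  have hne : (1 + z / ((n:ℂ)+1)) ≠ 0 := Complex.slitPlane_ne_zero (one_add_div_slitPlane hz)
  congr 1
  rw [eq_div_iff hne, inv_mul_eq_div]
  field_simp [nat_add_one_ne_zero n, nat_add_one_add_ne_zero hz.le]


noncomputable def L (z : ℂ) : ℂ := -(γ : ℂ) * z - Complex.log z + ∑' n, g n z

lemma harmonic_cast (N : ℕ) : ((harmonic N : ℝ) : ℂ) = ∑ n ∈ Finset.range N, ((n : ℂ) + 1)⁻¹ := by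
  rw [harmonic]
  push_cast
  rfl

lemma prod_fact (N : ℕ) : ∏ n ∈ Finset.range N, ((n : ℂ) + 1) = ((Nat.factorial N : ℕ) : ℂ) := by
  calc ∏ n ∈ Finset.range N, ((n : ℂ) + 1)
      = ((∏ n ∈ Finset.range N, (n + 1) : ℕ) : ℂ) := by push_cast; rfl
    _ = ((Nat.factorial N : ℕ) : ℂ) := by rw [Finset.prod_range_add_one_eq_factorial]

lemma exp_partial (z : ℂ) (hz : 0 < z.re) (N : ℕ) (hN : 1 ≤ N) :
    Complex.exp (-(γ : ℂ) * z - Complex.log z + ∑ n ∈ Finset.range N, g n z)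
      = Complex.GammaSeq z N
        * Complex.exp (z * (((harmonic N : ℝ) : ℂ) - (γ : ℂ) - (Real.log N : ℂ))) := by
  have hzne : z ≠ 0 := by
    intro h; rw [h] at hz; simp at hz
  have hfacne : ∀ n ∈ Finset.range N, (1 + z / ((n:ℂ)+1)) ≠ 0 := fun n _ =>
    Complex.slitPlane_ne_zero (one_add_div_slitPlane hz)
  have hprodne : (∏ n ∈ Finset.range N, (((n:ℂ)+1) + z)) ≠ 0 :=
    Finset.prod_ne_zero_iff.mpr fun n _ => nat_add_one_add_ne_zero hz.le
  have hNfne : ((Nat.factorial N : ℕ) : ℂ) ≠ 0 := by exact_mod_cast Nat.factorial_ne_zero N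
  have hNne : (N : ℂ) ≠ 0 := by exact_mod_cast (by omega : N ≠ 0)
  -- LHS computation
  have hsplit : ∑ n ∈ Finset.range N, g n z
      = z * ((harmonic N : ℝ) : ℂ) - ∑ n ∈ Finset.range N, Complex.log (1 + z / ((n:ℂ)+1)) := by
    simp only [g]
    rw [Finset.sum_sub_distrib]
    congr 1
    rw [harmonic_cast, Finset.mul_sum]
    exact Finset.sum_congr rfl fun n _ => div_eq_mul_inv _ _
  have hexpprod : Complex.exp (∑ n ∈ Finset.range N, Complex.log (1 + z / ((n:ℂ)+1)))
      = (∏ n ∈ Finset.range N, (((n:ℂ)+1) + z)) / ((Nat.factorial N : ℕ) : ℂ) := by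
    rw [Complex.exp_sum]
    have : ∀ n ∈ Finset.range N, Complex.exp (Complex.log (1 + z / ((n:ℂ)+1)))
        = (((n:ℂ)+1) + z) / ((n:ℂ)+1) := by
      intro n hn
      rw [Complex.exp_log (hfacne n hn)]
      field_simp [nat_add_one_ne_zero n]
    rw [Finset.prod_congr rfl this, Finset.prod_div_distrib, prod_fact]
  -- GammaSeq rewrite
  have hGS : Complex.GammaSeq z N
      = (N : ℂ) ^ z * ((Nat.factorial N : ℕ) : ℂ) / (z * ∏ n ∈ Finset.range N, (((n:ℂ)+1) + z)) := by
    rw [Complex.GammaSeq, Finset.prod_range_succ']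
    congr 1
    rw [Nat.cast_zero, add_zero, mul_comm]
    congr 1
    exact Finset.prod_congr rfl fun n _ => by push_cast; ring
  have hNz : (N : ℂ) ^ z = Complex.exp (z * (Real.log N : ℂ)) := by
    rw [Complex.cpow_def_of_ne_zero hNne, Complex.natCast_log, mul_comm]
  -- put it together
  rw [hsplit, hGS, hNz]
  rw [show -(γ : ℂ) * z - Complex.log z + (z * ((harmonic N : ℝ) : ℂ)
        - ∑ n ∈ Finset.range N, Complex.log (1 + z / ((n:ℂ)+1)))
      = (-(γ : ℂ) * z + z * ((harmonic N : ℝ) : ℂ)) - Complex.log z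
        - ∑ n ∈ Finset.range N, Complex.log (1 + z / ((n:ℂ)+1)) by ring]
  rw [Complex.exp_sub, Complex.exp_sub, Complex.exp_log hzne, hexpprod]
  rw [show z * (((harmonic N : ℝ) : ℂ) - (γ : ℂ) - (Real.log N : ℂ))
      = (-(γ : ℂ) * z + z * ((harmonic N : ℝ) : ℂ)) - z * (Real.log N : ℂ) by ring]
  rw [Complex.exp_sub]
  field_simp [Complex.exp_ne_zero]


open Filter Topology in
lemma exp_L {z : ℂ} (hz : 0 < z.re) : Complex.exp (L z) = Complex.Gamma z := by
  have h3 : Tendsto (fun N => Complex.exp (-(γ : ℂ) * z - Complex.log z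
      + ∑ n ∈ Finset.range N, g n z)) atTop (𝓝 (Complex.exp (L z))) := by
    apply (Complex.continuous_exp.tendsto _).comp
    rw [L]
    exact ((summable_g z).hasSum.tendsto_sum_nat).const_add _
  have ht0 : Tendsto (fun N : ℕ => ((harmonic N : ℝ) - γ - Real.log N : ℝ)) atTop (𝓝 0) := by
    have h := Real.tendsto_harmonic_sub_log.sub_const γ
    rw [sub_self] at h
    apply h.congr
    intro n; ring
  have ht1 : Tendsto (fun N : ℕ => Complex.exp (z * (((harmonic N : ℝ) : ℂ) - (γ : ℂ)
      - (Real.log N : ℂ)))) atTop (𝓝 1) := by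
    have hm : Tendsto (fun N : ℕ => z * (((harmonic N : ℝ) : ℂ) - (γ : ℂ) - (Real.log N : ℂ)))
        atTop (𝓝 (0 : ℂ)) := by
      have h := ((Complex.continuous_ofReal.tendsto (0 : ℝ)).comp ht0).const_mul z
      rw [Complex.ofReal_zero, mul_zero] at h
      apply h.congr
      intro n
      simp only [Function.comp_apply]
      push_cast
      ring
    have := (Complex.continuous_exp.tendsto (0 : ℂ)).comp hm
    simpa [Function.comp_def] using this
  have h2 : Tendsto (fun N => Complex.GammaSeq z N * Complex.exp (z * (((harmonic N : ℝ) : ℂ)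
      - (γ : ℂ) - (Real.log N : ℂ)))) atTop (𝓝 (Complex.Gamma z)) := by
    have := (Complex.GammaSeq_tendsto_Gamma z).mul ht1
    simpa using this
  refine tendsto_nhds_unique h3 (h2.congr' ?_)
  filter_upwards [eventually_ge_atTop 1] with N hN
  exact (exp_partial z hz N hN).symm

open Filter Topology in
lemma hasDerivAt_L {z : ℂ} (hz : 0 < z.re) :
    HasDerivAt L (-(γ : ℂ) - z⁻¹ + ∑' n, g' n z) z := by
  have h1 : HasDerivAt (fun w : ℂ => -(γ : ℂ) * w) (-(γ : ℂ)) z := by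
    simpa using (hasDerivAt_id z).const_mul (-(γ : ℂ))
  have h2 : HasDerivAt Complex.log z⁻¹ z := Complex.hasDerivAt_log (Or.inl hz)
  have h3 : HasDerivAt (fun w => ∑' n, g n w) (∑' n, g' n z) z := by
    set t : Set ℂ := {w : ℂ | 0 < w.re} ∩ Metric.ball 0 (‖z‖ + 1) with ht
    have hto : IsOpen t := ((isOpen_lt continuous_const Complex.continuous_re).inter
      Metric.isOpen_ball)
    have htc : Convex ℝ t := (convex_halfSpace_re_gt 0).inter (convex_ball 0 _)
    have hzt : z ∈ t := ⟨hz, by simp [Metric.mem_ball]⟩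
    refine hasDerivAt_tsum_of_isPreconnected
      (u := fun n : ℕ => (‖z‖ + 1) / ((n : ℝ) + 1) ^ 2) ?_ hto htc.isPreconnected
      (fun n y hy => hasDerivAt_g n hy.1) (fun n y hy => ?_) hzt (summable_g z) hzt
    · simp_rw [div_eq_mul_inv]
      apply Summable.mul_left
      have h0 : Summable (fun n : ℕ => ((n : ℝ) ^ 2)⁻¹) := Real.summable_nat_pow_inv.mpr one_lt_two
      have := (summable_nat_add_iff (f := fun n : ℕ => ((n : ℝ) ^ 2)⁻¹) 1).mpr h0
      apply this.congr
      intro n; push_cast; ring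
    · refine (norm_g'_le n hy.1.le).trans ?_
      have hyb : ‖y‖ ≤ ‖z‖ + 1 := by
        have := hy.2
        rw [Metric.mem_ball, dist_zero_right] at this
        linarith
      exact (div_le_div_iff_of_pos_right (by positivity)).mpr hyb
  exact (h1.sub h2).add h3


lemma digamma_eq {z : ℂ} (hz : 0 < z.re) :
    _root_.digamma z = -(γ : ℂ) - z⁻¹ + ∑' n, g' n z := by
  have hL := hasDerivAt_L hz
  have hev : (fun w => Complex.exp (L w)) =ᶠ[nhds z] Complex.Gamma := by
    filter_upwards [(isOpen_lt continuous_const Complex.continuous_re).mem_nhds hz] with w hw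
    exact exp_L hw
  have hG : HasDerivAt Complex.Gamma
      (Complex.exp (L z) * (-(γ : ℂ) - z⁻¹ + ∑' n, g' n z)) z :=
    hL.cexp.congr_of_eventuallyEq hev.symm
  rw [_root_.digamma, hG.deriv, exp_L hz, mul_comm, mul_div_assoc,
    div_self (Complex.Gamma_ne_zero_of_re_pos hz), mul_one]

/-- `a ξ n = 1/(n+1+iξ)`. -/
noncomputable def aa (ξ : ℝ) (n : ℕ) : ℂ := (((n : ℂ) + 1) + Complex.I * ξ)⁻¹

lemma re_I_mul (ξ : ℝ) : (Complex.I * (ξ:ℂ)).re = 0 := by simp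

lemma norm_aa_le (ξ : ℝ) (n : ℕ) : ‖aa ξ n‖ ≤ ((n:ℝ)+1)⁻¹ := by
  rw [aa, norm_inv]
  have h := norm_nat_add_one_le (n := n) (z := Complex.I * ξ) (by simp)
  exact inv_anti₀ (by positivity) h

lemma aa_sub (ξ : ℝ) (n : ℕ) : aa ξ n - aa ξ (n+1) = aa ξ n * aa ξ (n+1) := by
  have h1 : ((n:ℂ)+1) + Complex.I * ξ ≠ 0 := nat_add_one_add_ne_zero (by simp)
  have h2 : (((n+1:ℕ):ℂ)+1) + Complex.I * ξ ≠ 0 := nat_add_one_add_ne_zero (by simp)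
  rw [aa, aa]
  rw [inv_sub_inv h1 h2]
  push_cast
  rw [show ((n:ℂ) + 1 + 1 + Complex.I * ξ) - ((n:ℂ) + 1 + Complex.I * ξ) = 1 by ring]
  rw [one_div, mul_inv]

lemma hasSum_tel (ξ : ℝ) : HasSum (fun n => aa ξ n - aa ξ (n+1)) (aa ξ 0) := by
  have hsn : Summable (fun n => ‖aa ξ n - aa ξ (n+1)‖) := by
    refine Summable.of_nonneg_of_le (fun n => norm_nonneg _)
      (f := fun n : ℕ => (((n:ℝ)+1)^2)⁻¹) ?_ ?_
    · intro n
      rw [aa_sub, norm_mul]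
      calc ‖aa ξ n‖ * ‖aa ξ (n+1)‖ ≤ ((n:ℝ)+1)⁻¹ * ((n:ℝ)+1)⁻¹ := by
            apply mul_le_mul (norm_aa_le ξ n) ?_ (norm_nonneg _) (by positivity)
            refine (norm_aa_le ξ (n+1)).trans ?_
            apply inv_anti₀ (by positivity)
            push_cast; linarith
        _ = (((n:ℝ)+1)^2)⁻¹ := by rw [← mul_inv]; ring_nf
    · have h0 : Summable (fun n : ℕ => ((n : ℝ) ^ 2)⁻¹) := Real.summable_nat_pow_inv.mpr one_lt_two
      have := (summable_nat_add_iff (f := fun n : ℕ => ((n : ℝ) ^ 2)⁻¹) 1).mpr h0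
      apply this.congr
      intro n; push_cast; ring
  rw [hasSum_iff_tendsto_nat_of_summable_norm hsn]
  have hps : ∀ N : ℕ, ∑ n ∈ Finset.range N, (aa ξ n - aa ξ (n+1)) = aa ξ 0 - aa ξ N :=
    fun N => Finset.sum_range_sub' (aa ξ) N
  simp_rw [hps]
  have h0 : Filter.Tendsto (fun N : ℕ => aa ξ N) Filter.atTop (nhds 0) := by
    apply squeeze_zero_norm (norm_aa_le ξ)
    have := tendsto_one_div_add_atTop_nhds_zero_nat (𝕜 := ℝ)
    simpa [one_div] using this
  have := Filter.Tendsto.const_sub (aa ξ 0) h0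
  simpa using this

lemma hg'_eq (ξ : ℝ) (n : ℕ) : g' n (1 + Complex.I * ξ) = ((n:ℂ)+1)⁻¹ - aa ξ (n+1) := by
  rw [g', aa]
  congr 2
  push_cast
  ring

lemma summable_main (ξ : ℝ) : Summable (fun n : ℕ => ((n:ℂ)+1)⁻¹ - aa ξ n) := by
  have h1 : Summable (fun n : ℕ => g' n (1 + Complex.I * ξ)) := summable_g' (by simp)
  have h2 := (hasSum_tel ξ).summable
  have : (fun n : ℕ => ((n:ℂ)+1)⁻¹ - aa ξ n)
      = fun n : ℕ => g' n (1 + Complex.I * ξ) - (aa ξ n - aa ξ (n+1)) := by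
    funext n; rw [hg'_eq]; ring
  rw [this]
  exact h1.sub h2

lemma digamma_series_complex (ξ : ℝ) :
    _root_.digamma (1 + Complex.I * ξ) + (γ : ℂ) = ∑' n : ℕ, (((n:ℂ)+1)⁻¹ - aa ξ n) := by
  have hz : (0:ℝ) < (1 + Complex.I * (ξ:ℂ)).re := by simp
  rw [digamma_eq hz]
  have h1 : Summable (fun n : ℕ => g' n (1 + Complex.I * ξ)) := summable_g' (by simp)
  have htel := hasSum_tel ξ
  have heq : (fun n : ℕ => ((n:ℂ)+1)⁻¹ - aa ξ n)
      = fun n : ℕ => g' n (1 + Complex.I * ξ) - (aa ξ n - aa ξ (n+1)) := by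
    funext n; rw [hg'_eq]; ring
  rw [heq, Summable.tsum_sub h1 htel.summable, htel.tsum_eq]
  have haa0 : aa ξ 0 = (1 + Complex.I * ξ)⁻¹ := by rw [aa]; norm_num
  rw [haa0]
  ring

lemma digamma_re_series (ξ : ℝ) :
    (_root_.digamma (1 + Complex.I * ξ)).re + γ
      = ∑' n : ℕ, ξ^2 / (((n:ℝ)+1) * (((n:ℝ)+1)^2 + ξ^2)) := by
  have h := congrArg Complex.re (digamma_series_complex ξ)
  rw [Complex.add_re, Complex.ofReal_re] at h
  have hmap := Complex.reCLM.map_tsum (summable_main ξ)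
  simp only [Complex.reCLM_apply] at hmap
  rw [h, hmap]
  apply tsum_congr
  intro n
  have hpos : (0:ℝ) < ((n:ℝ)+1)^2 + ξ^2 := by positivity
  have hre1 : (((n:ℂ)+1)⁻¹).re = ((n:ℝ)+1)⁻¹ := by
    rw [show ((n:ℂ)+1) = (((n:ℝ)+1 : ℝ) : ℂ) by push_cast; ring, ← Complex.ofReal_inv,
      Complex.ofReal_re]
  have hre2 : (aa ξ n).re = ((n:ℝ)+1) / (((n:ℝ)+1)^2 + ξ^2) := by
    rw [aa, Complex.inv_re]
    congr 1
    · simp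
    · rw [Complex.normSq_apply]
      simp
      ring
  rw [Complex.sub_re, hre1, hre2]
  field_simp
  ring


/-- The integrand terms. -/
noncomputable def f (n : ℕ) (ξ : ℝ) : ℝ :=
  ξ^2 / (((((n:ℝ)+1) * (((n:ℝ)+1)^2 + ξ^2))) * (1 + ξ^2))

lemma f_nonneg (n : ℕ) (ξ : ℝ) : 0 ≤ f n ξ := by
  rw [f]; positivity

lemma f_cont (n : ℕ) : Continuous (f n) := by
  apply Continuous.div (by fun_prop) (by fun_prop)
  intro ξ
  positivity

lemma f_le (n : ℕ) (ξ : ℝ) : f n ξ ≤ (1 + ξ^2)⁻¹ := by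
  rw [f, inv_eq_one_div, div_le_div_iff₀ (by positivity) (by positivity)]
  have h1 : ξ^2 ≤ ((n:ℝ)+1)*(((n:ℝ)+1)^2+ξ^2) := by
    nlinarith [Nat.cast_nonneg (α := ℝ) n, sq_nonneg ξ,
      mul_nonneg (Nat.cast_nonneg (α := ℝ) n) (sq_nonneg ξ)]
  have h2 : (0:ℝ) ≤ 1 + ξ^2 := by positivity
  nlinarith [mul_le_mul_of_nonneg_right h1 h2]

lemma f_integrable (n : ℕ) : IntegrableOn (f n) (Set.Ioi 0) := by
  apply MeasureTheory.Integrable.mono' (g := fun ξ : ℝ => (1+ξ^2)⁻¹)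
    integrable_inv_one_add_sq.integrableOn (f_cont n).aestronglyMeasurable
  apply MeasureTheory.ae_of_all
  intro ξ
  rw [Real.norm_of_nonneg (f_nonneg n ξ)]
  exact f_le n ξ

lemma tendsto_div_one_add_sq : Filter.Tendsto (fun ξ : ℝ => ξ/(1+ξ^2))
    Filter.atTop (nhds 0) := by
  have h1 : Filter.Tendsto (fun ξ : ℝ => ξ⁻¹ + ξ) Filter.atTop Filter.atTop :=
    Filter.Tendsto.add_atTop tendsto_inv_atTop_zero Filter.tendsto_id
  have h2 := h1.inv_tendsto_atTop
  apply h2.congr'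
  filter_upwards [Filter.eventually_gt_atTop (0:ℝ)] with ξ hξ
  simp only [Pi.inv_apply]
  rw [eq_div_iff (by positivity : (1:ℝ)+ξ^2 ≠ 0)]
  rw [inv_mul_eq_div, div_eq_iff (by positivity : ξ⁻¹+ξ ≠ 0)]
  field_simp

lemma integral_f_zero : ∫ ξ in Set.Ioi (0:ℝ), f 0 ξ = π/2 * (1/1 - 1/2) := by
  set F : ℝ → ℝ := fun ξ => (Real.arctan ξ - ξ/(1+ξ^2))/2 with hF
  have hderiv : ∀ x ∈ Set.Ici (0:ℝ), HasDerivAt F (f 0 x) x := by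
    intro x _
    have hx : (1:ℝ) + x^2 ≠ 0 := by positivity
    have h1 : HasDerivAt Real.arctan (1/(1+x^2)) x := Real.hasDerivAt_arctan x
    have hden : HasDerivAt (fun ξ : ℝ => 1+ξ^2) (2*x) x := by
      simpa using ((hasDerivAt_pow 2 x).const_add 1)
    have h2 : HasDerivAt (fun ξ : ℝ => ξ/(1+ξ^2))
        ((1*(1+x^2) - x*(2*x))/((1+x^2)^2)) x := (hasDerivAt_id x).div hden hx
    have h3 := (h1.sub h2).div_const 2
    refine h3.congr_deriv (Eq.symm ?_)
    rw [f]
    push_cast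
    field_simp
    ring
  have htop : Filter.Tendsto F Filter.atTop (nhds (π/2/2)) := by
    apply Filter.Tendsto.div_const
    have ha : Filter.Tendsto Real.arctan Filter.atTop (nhds (π/2)) :=
      tendsto_nhds_of_tendsto_nhdsWithin Real.tendsto_arctan_atTop
    have := ha.sub tendsto_div_one_add_sq
    simpa using this
  have := MeasureTheory.integral_Ioi_of_hasDerivAt_of_tendsto' hderiv
    (f_integrable 0) htop
  rw [this, hF]
  norm_num [Real.arctan_zero]
  ring

lemma integral_f_succ (m : ℕ) : ∫ ξ in Set.Ioi (0:ℝ), f (m+1) ξ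
    = π/2 * (1/((m:ℝ)+2) - 1/((m:ℝ)+3)) := by
  set c : ℝ := (m:ℝ)+2 with hc
  have hc1 : (1:ℝ) < c := by
    rw [hc]
    linarith [Nat.cast_nonneg (α := ℝ) m]
  have hc0 : (0:ℝ) < c := by linarith
  have hcne : c ≠ 0 := ne_of_gt hc0
  have hc21 : c^2 - 1 ≠ 0 := by nlinarith
  have hfeq : ∀ ξ : ℝ, f (m+1) ξ = ξ^2/((c*(c^2+ξ^2))*(1+ξ^2)) := by
    intro ξ
    rw [f, hc]
    push_cast
    ring_nf
  set F : ℝ → ℝ := fun ξ => (c * Real.arctan (ξ/c) - Real.arctan ξ)/(c*(c^2-1)) with hF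
  have hderiv : ∀ x ∈ Set.Ici (0:ℝ), HasDerivAt F (f (m+1) x) x := by
    intro x _
    have ha : HasDerivAt (fun ξ : ℝ => Real.arctan (ξ/c)) ((1/(1+(x/c)^2)) * (1/c)) x := by
      have hin : HasDerivAt (fun ξ : ℝ => ξ/c) (1/c) x := by
        simpa using (hasDerivAt_id x).div_const c
      exact (Real.hasDerivAt_arctan (x/c)).comp x hin
    have h3 := ((ha.const_mul c).sub (Real.hasDerivAt_arctan x)).div_const (c*(c^2-1))
    refine h3.congr_deriv (Eq.symm ?_)
    rw [hfeq x]
    have h4 : (1:ℝ) + (x/c)^2 ≠ 0 := by positivity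
    field_simp
    ring
  have htop : Filter.Tendsto F Filter.atTop (nhds ((c*(π/2) - π/2)/(c*(c^2-1)))) := by
    apply Filter.Tendsto.div_const
    have hdc : Filter.Tendsto (fun ξ : ℝ => ξ/c) Filter.atTop Filter.atTop :=
      Filter.tendsto_id.atTop_div_const hc0
    have ha : Filter.Tendsto (fun ξ : ℝ => Real.arctan (ξ/c)) Filter.atTop (nhds (π/2)) :=
      (tendsto_nhds_of_tendsto_nhdsWithin Real.tendsto_arctan_atTop).comp hdc
    exact (ha.const_mul c).sub (tendsto_nhds_of_tendsto_nhdsWithin Real.tendsto_arctan_atTop)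
  have := MeasureTheory.integral_Ioi_of_hasDerivAt_of_tendsto' hderiv
    (f_integrable (m+1)) htop
  rw [this, hF]
  norm_num [Real.arctan_zero]
  rw [show ((m:ℝ)+3) = c+1 by rw [hc]; ring]
  field_simp
  ring

lemma integral_f (n : ℕ) : ∫ ξ in Set.Ioi (0:ℝ), f n ξ
    = π/2 * (1/((n:ℝ)+1) - 1/((n:ℝ)+2)) := by
  cases n with
  | zero => simpa using integral_f_zero
  | succ m =>
      have := integral_f_succ m
      rw [this]
      push_cast
      ring_nf


lemma hasSum_tel_real : HasSum (fun n : ℕ => 1/((n:ℝ)+1) - 1/((n:ℝ)+2)) 1 := by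
  rw [hasSum_iff_tendsto_nat_of_nonneg]
  · have hps : ∀ N : ℕ, ∑ n ∈ Finset.range N, (1/((n:ℝ)+1) - 1/((n:ℝ)+2))
        = 1 - 1/((N:ℝ)+1) := by
      intro N
      calc ∑ n ∈ Finset.range N, (1/((n:ℝ)+1) - 1/((n:ℝ)+2))
          = ∑ n ∈ Finset.range N,
              ((fun k : ℕ => 1/((k:ℝ)+1)) n - (fun k : ℕ => 1/((k:ℝ)+1)) (n+1)) := by
            apply Finset.sum_congr rfl
            intro n _
            push_cast
            ring_nf
        _ = (fun k : ℕ => 1/((k:ℝ)+1)) 0 - (fun k : ℕ => 1/((k:ℝ)+1)) N :=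
            Finset.sum_range_sub' _ N
        _ = 1 - 1/((N:ℝ)+1) := by norm_num
    simp_rw [hps]
    have h0 : Filter.Tendsto (fun N : ℕ => 1/((N:ℝ)+1)) Filter.atTop (nhds 0) :=
      tendsto_one_div_add_atTop_nhds_zero_nat
    have := h0.const_sub 1
    simpa using this
  · intro n
    have h1 : 1/((n:ℝ)+2) ≤ 1/((n:ℝ)+1) := by
      apply div_le_div_of_nonneg_left (by norm_num) (by positivity) (by linarith)
    linarith

lemma hasSum_final : HasSum (fun n : ℕ => π/2 * (1/((n:ℝ)+1) - 1/((n:ℝ)+2))) (π/2) := by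
  have := hasSum_tel_real.mul_left (π/2)
  simpa using this

lemma integrand_eq (ξ : ℝ) :
    ((_root_.digamma (1 + Complex.I * ξ)).re + γ) / (1 + ξ^2) = ∑' n : ℕ, f n ξ := by
  rw [digamma_re_series ξ, ← tsum_div_const]
  apply tsum_congr
  intro n
  rw [f, div_div]

theorem main : ∫ ξ in Set.Ioi (0 : ℝ),
    ((_root_.digamma (1 + Complex.I * ξ)).re + γ) / (1 + ξ ^ 2) = π / 2 := by
  have hint : ∀ n : ℕ, ∫⁻ ξ in Set.Ioi (0:ℝ), ‖f n ξ‖ₑ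
      = ENNReal.ofReal (π/2 * (1/((n:ℝ)+1) - 1/((n:ℝ)+2))) := by
    intro n
    rw [← MeasureTheory.ofReal_integral_norm_eq_lintegral_enorm (f_integrable n)]
    congr 1
    rw [← integral_f n]
    apply MeasureTheory.integral_congr_ae
    apply MeasureTheory.ae_of_all
    intro ξ
    exact Real.norm_of_nonneg (f_nonneg n ξ)
  have hswap : ∫ ξ in Set.Ioi (0:ℝ), (∑' n : ℕ, f n ξ) = ∑' n : ℕ, ∫ ξ in Set.Ioi (0:ℝ), f n ξ := by
    apply MeasureTheory.integral_tsum
    · exact fun n => (f_cont n).aestronglyMeasurable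
    · simp_rw [hint]
      rw [← ENNReal.ofReal_tsum_of_nonneg]
      · exact ENNReal.ofReal_ne_top
      · intro n
        have h1 : 1/((n:ℝ)+2) ≤ 1/((n:ℝ)+1) := by
          apply div_le_div_of_nonneg_left (by norm_num) (by positivity) (by linarith)
        have : (0:ℝ) ≤ π/2 := by positivity
        nlinarith
      · exact hasSum_final.summable
  calc ∫ ξ in Set.Ioi (0 : ℝ), ((_root_.digamma (1 + Complex.I * ξ)).re + γ) / (1 + ξ ^ 2)
      = ∫ ξ in Set.Ioi (0:ℝ), (∑' n : ℕ, f n ξ) := by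
        apply MeasureTheory.integral_congr_ae
        apply MeasureTheory.ae_of_all
        intro ξ
        exact integrand_eq ξ
    _ = ∑' n : ℕ, ∫ ξ in Set.Ioi (0:ℝ), f n ξ := hswap
    _ = ∑' n : ℕ, π/2 * (1/((n:ℝ)+1) - 1/((n:ℝ)+2)) := by
        apply tsum_congr
        intro n
        exact integral_f n
    _ = π/2 := hasSum_final.tsum_eq

end DG


theorem digamma_lorentzian_integral :
    ∫ ξ in Set.Ioi (0 : ℝ),
        ((_root_.digamma (1 + Complex.I * ξ)).re + Real.eulerMascheroniConstant) / (1 + ξ ^ 2)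
      = π / 2 := DG.main
end

section
/- Define K₊(z) = (−iz)^{1/2} / Γ(1 − iz/(2π)) · exp(−(iz/(2π)) log(−iz)) and K₋(z) = (iz)^{1/2} / Γ(1 + iz/(2π)) · exp((iz/(2π)) log(iz)), using principal branches. Then for every real p ≠ 0, K₊(p)·K₋(p) = 1 − e^{−|p|}. -/
open Complex Real

/-- The Wiener–Hopf factor analytic in the upper half-plane. -/
noncomputable def Kplus (z : ℂ) : ℂ :=
  (-Complex.I * z) ^ ((1 : ℂ) / 2) / Complex.Gamma (1 - Complex.I * z / (2 * π)) *
    Complex.exp (-(Complex.I * z / (2 * π)) * Complex.log (-Complex.I * z))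

/-- The Wiener–Hopf factor analytic in the lower half-plane. -/
noncomputable def Kminus (z : ℂ) : ℂ :=
  (Complex.I * z) ^ ((1 : ℂ) / 2) / Complex.Gamma (1 + Complex.I * z / (2 * π)) *
    Complex.exp ((Complex.I * z / (2 * π)) * Complex.log (Complex.I * z))

lemma Kswap (z : ℂ) : Kplus (-z) = Kminus z ∧ Kminus (-z) = Kplus z := by
  constructor <;> · unfold Kplus Kminus
                    norm_num [neg_mul_neg, mul_neg, neg_div, sub_neg_eq_add, neg_neg]
                    try ring_nf

lemma real_id (p : ℝ) (hp : 0 < p) :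
    p * Real.exp (-(p/2)) / (p/2 / Real.sinh (p/2)) = 1 - Real.exp (-p) := by
  have he : Real.exp (p/2) ≠ 0 := (Real.exp_pos _).ne'
  have hb : Real.exp p = Real.exp (p/2) ^ 2 := by
    rw [sq, ← Real.exp_add]; ring_nf
  have hsinh : Real.sinh (p/2) ≠ 0 := by positivity
  rw [Real.sinh_eq] at hsinh ⊢
  rw [Real.exp_neg, Real.exp_neg p, hb]
  field_simp

lemma aux1 (p s : ℝ) (hs : s ≠ 0) :
    Complex.I * p / (2 * ↑π) * ((π:ℂ) / ((s:ℂ) * Complex.I)) = ((p/2/s : ℝ) : ℂ) := by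
  have hIne := Complex.I_ne_zero
  have hπc : (π : ℂ) ≠ 0 := Complex.ofReal_ne_zero.mpr Real.pi_ne_zero
  have hsc : (s:ℂ) ≠ 0 := Complex.ofReal_ne_zero.mpr hs
  push_cast
  field_simp

lemma main_pos (p : ℝ) (hp : 0 < p) :
    Kplus p * Kminus p = ((1 - Real.exp (-p) : ℝ) : ℂ) := by
  have hπ : (π : ℝ) ≠ 0 := Real.pi_ne_zero
  have hπc : (π : ℂ) ≠ 0 := Complex.ofReal_ne_zero.mpr hπ
  have hpc : (p : ℂ) ≠ 0 := by exact_mod_cast hp.ne'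
  set w : ℂ := Complex.I * p / (2 * π) with hw
  have hwne : w ≠ 0 := by
    simp [hw, div_eq_zero_iff, Complex.I_ne_zero, hpc, hπ, Complex.ofReal_ne_zero]
  have hne1 : (Complex.I * (p:ℂ)) ≠ 0 := mul_ne_zero Complex.I_ne_zero hpc
  have hne2 : (-Complex.I * (p:ℂ)) ≠ 0 := by simpa [neg_mul] using neg_ne_zero.mpr hne1
  have hlogp : Complex.log (Complex.I * p) = (Real.log p : ℂ) + (π/2)*Complex.I := by
    rw [mul_comm, Complex.log, Complex.arg_real_mul _ hp, Complex.arg_I]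
    simp [_root_.abs_of_pos hp]
  have hlogm : Complex.log (-Complex.I * p) = (Real.log p : ℂ) - (π/2)*Complex.I := by
    rw [show -Complex.I * (p:ℂ) = (p:ℂ) * (-Complex.I) by ring, Complex.log,
      Complex.arg_real_mul _ hp, Complex.arg_neg_I]
    simp [_root_.abs_of_pos hp]; ring
  have hsinh : Real.sinh (p/2) ≠ 0 := by positivity
  have hsin : Complex.sin (π * w) = (Real.sinh (p/2) : ℂ) * Complex.I := by
    rw [show (π:ℂ) * w = ((p/2 : ℝ) : ℂ) * Complex.I by
      rw [hw]; push_cast; field_simp]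
    rw [Complex.sin_mul_I, Complex.ofReal_sinh]
  have hΓ : Complex.Gamma (1 - w) * Complex.Gamma (1 + w)
      = ((p/2 / Real.sinh (p/2) : ℝ) : ℂ) := by
    rw [show (1 + w) = w + 1 by ring, Complex.Gamma_add_one w hwne,
      show Complex.Gamma (1-w) * (w * Complex.Gamma w)
        = w * (Complex.Gamma w * Complex.Gamma (1-w)) by ring,
      Complex.Gamma_mul_Gamma_one_sub, hsin, hw]
    exact aux1 p _ hsinh
  have key : Kplus p * Kminus p
      = (Complex.exp (Complex.log (-Complex.I * p) * (1/2))
          * Complex.exp (Complex.log (Complex.I * p) * (1/2))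
          * Complex.exp (-w * Complex.log (-Complex.I * p))
          * Complex.exp (w * Complex.log (Complex.I * p)))
        / (Complex.Gamma (1 - w) * Complex.Gamma (1 + w)) := by
    unfold Kplus Kminus
    rw [← hw, Complex.cpow_def_of_ne_zero hne2, Complex.cpow_def_of_ne_zero hne1]
    ring
  have hwpi : w * ((π:ℂ) * Complex.I) = ((-(p/2) : ℝ) : ℂ) := by
    rw [hw]
    push_cast
    field_simp
    linear_combination Complex.I_sq
  rw [key, hlogp, hlogm, hΓ, ← Complex.exp_add, ← Complex.exp_add, ← Complex.exp_add,
    show ((↑(Real.log p) - ↑π/2*Complex.I) * (1/2) + (↑(Real.log p) + ↑π/2*Complex.I) * (1/2)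
        + (-w * (↑(Real.log p) - ↑π/2*Complex.I)) + w * (↑(Real.log p) + ↑π/2*Complex.I))
      = (↑(Real.log p) : ℂ) + w * ((π:ℂ) * Complex.I) by ring,
    hwpi, ← Complex.ofReal_add, ← Complex.ofReal_exp, Real.exp_add, Real.exp_log hp]
  rw [← Complex.ofReal_div, Complex.ofReal_inj]
  exact real_id p hp

theorem wiener_hopf_factorisation (p : ℝ) (hp : p ≠ 0) :
    Kplus p * Kminus p = ((1 - Real.exp (-|p|) : ℝ) : ℂ) := by
  rcases hp.lt_or_gt with h | h
  · have h' : 0 < -p := by linarith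
    have := main_pos (-p) h'
    rw [Complex.ofReal_neg] at this
    rw [(Kswap (p:ℂ)).1, (Kswap (p:ℂ)).2] at this
    rw [abs_of_neg h, mul_comm]
    exact this
  · rw [main_pos p h, abs_of_pos h]
end

section
/- The limit as Q → ∞ of [(1/π)∫_0^∞ (1 − e^{−2pQ})/(e^p − 1) dp − (log Q)/π] equals (γ + log 2)/π. -/
open Real MeasureTheory Filter Set

lemma integral_exp_neg_mul (k : ℝ) (hk : 0 < k) :
    ∫ x in Ioi (0:ℝ), Real.exp (-(k * x)) = 1 / k := by
  have h : ∀ x ∈ Ici (0:ℝ), HasDerivAt (fun x => -Real.exp (-(k * x)) / k)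
      (Real.exp (-(k * x))) x := by
    intro x _
    have h1 : HasDerivAt (fun x : ℝ => -(k * x)) (-k) x := by
      simpa using ((hasDerivAt_id x).const_mul k).fun_neg
    have := (h1.exp).fun_neg.div_const k
    refine this.congr_deriv ?_
    rw [mul_neg, neg_neg, mul_div_assoc, div_self hk.ne', mul_one]
  have htend : Tendsto (fun x => -Real.exp (-(k * x)) / k) atTop (nhds 0) := by
    have h1 : Tendsto (fun x : ℝ => k * x) atTop atTop := tendsto_id.const_mul_atTop hk
    have h2 : Tendsto (fun x : ℝ => -(k * x)) atTop atBot := tendsto_neg_atTop_atBot.comp h1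
    have := (Real.tendsto_exp_atBot.comp h2).neg.div_const k
    simpa using this
  have := MeasureTheory.integral_Ioi_of_hasDerivAt_of_tendsto'
      (f := fun x => -Real.exp (-(k * x)) / k) h ?_ htend
  · rw [this]; simp; field_simp
  · exact (exp_neg_integrableOn_Ioi 0 hk).congr_fun (fun x _ => by ring_nf) measurableSet_Ioi

lemma sum_form (n : ℕ) {p : ℝ} (hp : 0 < p) :
    (1 - Real.exp (-((n:ℝ) * p))) / (Real.exp p - 1)
      = ∑ k ∈ Finset.range n, Real.exp (-(((k:ℝ) + 1) * p)) := by
  set x := Real.exp (-p) with hxdef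
  have hx1 : x < 1 := by rw [hxdef, Real.exp_lt_one_iff]; linarith
  have hx0 : (0:ℝ) < x := Real.exp_pos _
  have hep : Real.exp p = x⁻¹ := by rw [hxdef, ← Real.exp_neg, neg_neg]
  have hxn : Real.exp (-((n:ℝ) * p)) = x ^ n := by
    rw [hxdef, ← Real.exp_nat_mul]; congr 1; ring
  have hsum : ∑ k ∈ Finset.range n, Real.exp (-(((k:ℝ)+1) * p))
      = ∑ k ∈ Finset.range n, x ^ (k+1) := by
    refine Finset.sum_congr rfl fun k _ => ?_
    rw [hxdef, ← Real.exp_nat_mul]; congr 1; push_cast; ring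
  have h1 : x ≠ 1 := ne_of_lt hx1
  have hgeom : ∑ k ∈ Finset.range n, x ^ (k+1) = x * ((x^n - 1)/(x-1)) := by
    rw [← geom_sum_eq h1 n, Finset.mul_sum]
    exact Finset.sum_congr rfl fun k _ => (pow_succ' x k)
  rw [hsum, hep, hxn, hgeom]
  have hx1' : (1:ℝ) - x ≠ 0 := sub_ne_zero.mpr h1.symm
  have hinv : x⁻¹ - 1 = (1 - x)/x := by field_simp
  rw [hinv, div_div_eq_mul_div, show x^n - 1 = -(1-x^n) by ring,
    show x - 1 = -(1-x) by ring, neg_div_neg_eq]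
  ring

lemma integral_nat (n : ℕ) :
    ∫ p in Ioi (0:ℝ), (1 - Real.exp (-((n:ℝ) * p))) / (Real.exp p - 1)
      = (harmonic n : ℝ) := by
  rw [MeasureTheory.setIntegral_congr_fun measurableSet_Ioi
    (fun p (hp : p ∈ Ioi 0) => sum_form n hp)]
  have hint : ∀ k ∈ Finset.range n, Integrable (fun x : ℝ => Real.exp (-(((k:ℝ)+1) * x)))
      (volume.restrict (Ioi 0)) := fun k _ =>
    (exp_neg_integrableOn_Ioi 0 (by positivity : (0:ℝ) < (k:ℝ)+1)).congr_fun
      (fun x _ => by ring_nf) measurableSet_Ioi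
  rw [MeasureTheory.integral_finset_sum (Finset.range n) hint]
  trans ∑ k ∈ Finset.range n, (1 / ((k:ℝ)+1))
  · exact Finset.sum_congr rfl fun k _ => integral_exp_neg_mul ((k:ℝ)+1) (by positivity)
  · rw [harmonic]
    push_cast
    simp [one_div]

lemma denom_pos {p : ℝ} (hp : 0 < p) : 0 < Real.exp p - 1 := by
  linarith [Real.add_one_le_exp p]

lemma f_nonneg {a p : ℝ} (ha : 0 ≤ a) (hp : 0 < p) :
    0 ≤ (1 - Real.exp (-(a * p))) / (Real.exp p - 1) := by
  apply div_nonneg _ (denom_pos hp).le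
  have : Real.exp (-(a * p)) ≤ 1 := Real.exp_le_one_iff.mpr (by nlinarith)
  linarith

lemma f_mono {a b p : ℝ} (hab : a ≤ b) (hp : 0 < p) :
    (1 - Real.exp (-(a * p))) / (Real.exp p - 1)
      ≤ (1 - Real.exp (-(b * p))) / (Real.exp p - 1) := by
  have hnum : Real.exp (-(b * p)) ≤ Real.exp (-(a * p)) :=
    Real.exp_le_exp.mpr (by nlinarith)
  exact (div_le_div_iff_of_pos_right (denom_pos hp)).mpr (by linarith)

lemma g_integrable (n : ℕ) :
    IntegrableOn (fun p => (1 - Real.exp (-((n:ℝ) * p))) / (Real.exp p - 1)) (Ioi 0) := by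
  have hint : ∀ k ∈ Finset.range n, Integrable (fun x : ℝ => Real.exp (-(((k:ℝ)+1) * x)))
      (volume.restrict (Ioi 0)) := fun k _ =>
    (exp_neg_integrableOn_Ioi 0 (by positivity : (0:ℝ) < (k:ℝ)+1)).congr_fun
      (fun x _ => by ring_nf) measurableSet_Ioi
  refine (MeasureTheory.integrable_finset_sum (Finset.range n) hint).congr ?_
  refine (ae_restrict_iff' measurableSet_Ioi).mpr (Filter.Eventually.of_forall fun p hp => ?_)
  exact (sum_form n hp).symm

set_option maxHeartbeats 1000000 in
lemma f_integrable {a : ℝ} (ha : 0 ≤ a) :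
    IntegrableOn (fun p => (1 - Real.exp (-(a * p))) / (Real.exp p - 1)) (Ioi 0) := by
  have han : a ≤ (⌈a⌉₊ : ℝ) := Nat.le_ceil a
  refine MeasureTheory.Integrable.mono (g_integrable ⌈a⌉₊) ?_ ?_
  · apply ContinuousOn.aestronglyMeasurable ?_ measurableSet_Ioi
    apply ContinuousOn.div (by fun_prop) (by fun_prop)
    exact fun p hp => (denom_pos hp).ne'
  · refine (ae_restrict_iff' measurableSet_Ioi).mpr (Filter.Eventually.of_forall fun p hp => ?_)
    rw [Real.norm_eq_abs, Real.norm_eq_abs, abs_of_nonneg (f_nonneg ha hp),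
      abs_of_nonneg (f_nonneg (by positivity) hp)]
    exact f_mono han hp

lemma F_lower {Q : ℝ} (hQ : 1 ≤ Q) :
    (harmonic ⌊2*Q⌋₊ : ℝ) ≤ ∫ p in Ioi (0:ℝ),
      (1 - Real.exp (-((2*Q) * p))) / (Real.exp p - 1) := by
  rw [← integral_nat]
  refine setIntegral_mono_on (g_integrable _) (f_integrable (by linarith)) measurableSet_Ioi
    fun p hp => f_mono (Nat.floor_le (by linarith)) hp

lemma F_upper {Q : ℝ} (hQ : 1 ≤ Q) :
    (∫ p in Ioi (0:ℝ), (1 - Real.exp (-((2*Q) * p))) / (Real.exp p - 1))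
      ≤ (harmonic ⌈2*Q⌉₊ : ℝ) := by
  rw [← integral_nat]
  refine setIntegral_mono_on (f_integrable (by linarith)) (g_integrable _) measurableSet_Ioi
    fun p hp => f_mono (Nat.le_ceil _) hp

lemma log_shift (c : ℝ) :
    Tendsto (fun Q : ℝ => Real.log (2*Q + c) - Real.log (2*Q)) atTop (nhds 0) := by
  have h2Q : Tendsto (fun Q : ℝ => 2*Q) atTop atTop :=
    tendsto_id.const_mul_atTop two_pos
  have h0 : Tendsto (fun Q : ℝ => c/(2*Q)) atTop (nhds 0) :=
    tendsto_const_nhds.div_atTop h2Q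
  have h1 : Tendsto (fun Q : ℝ => 1 + c/(2*Q)) atTop (nhds 1) := by
    simpa using tendsto_const_nhds.add h0
  have hlog : Tendsto (fun Q : ℝ => Real.log (1 + c/(2*Q))) atTop (nhds 0) := by
    have := (Real.continuousAt_log one_ne_zero).tendsto.comp h1
    simpa [Function.comp_def] using this
  apply hlog.congr'
  filter_upwards [eventually_gt_atTop (max 1 (|c|))] with Q hQ
  have hQ1 : 1 < Q := lt_of_le_of_lt (le_max_left _ _) hQ
  have hc : |c| < Q := lt_of_le_of_lt (le_max_right _ _) hQ
  have h2Q0 : (0:ℝ) < 2*Q := by linarith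
  have hpos : (0:ℝ) < 2*Q + c := by
    have := neg_abs_le c; linarith
  rw [show 1 + c/(2*Q) = (2*Q + c)/(2*Q) by field_simp, Real.log_div hpos.ne' h2Q0.ne']

lemma log_floor_tendsto :
    Tendsto (fun Q : ℝ => Real.log (⌊2*Q⌋₊ : ℝ) - Real.log (2*Q)) atTop (nhds 0) := by
  refine tendsto_of_tendsto_of_tendsto_of_le_of_le' (log_shift (-1)) tendsto_const_nhds ?_ ?_
  · filter_upwards [eventually_ge_atTop (1:ℝ)] with Q hQ
    have h1 : (1:ℝ) ≤ 2*Q - 1 := by linarith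
    have h2 : 2*Q - 1 ≤ (⌊2*Q⌋₊ : ℝ) := by
      have := Nat.sub_one_lt_floor (2*Q); linarith
    have := Real.log_le_log (by linarith) h2
    simp only [show 2*Q + (-1) = 2*Q - 1 by ring]
    linarith
  · filter_upwards [eventually_ge_atTop (1:ℝ)] with Q hQ
    have h2 : (⌊2*Q⌋₊ : ℝ) ≤ 2*Q := Nat.floor_le (by linarith)
    have := Real.log_le_log (Nat.cast_pos.mpr (Nat.floor_pos.mpr (by linarith))) h2
    linarith

lemma log_ceil_tendsto :
    Tendsto (fun Q : ℝ => Real.log (⌈2*Q⌉₊ : ℝ) - Real.log (2*Q)) atTop (nhds 0) := by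
  refine tendsto_of_tendsto_of_tendsto_of_le_of_le' tendsto_const_nhds (log_shift 1) ?_ ?_
  · filter_upwards [eventually_ge_atTop (1:ℝ)] with Q hQ
    have h2 : 2*Q ≤ (⌈2*Q⌉₊ : ℝ) := Nat.le_ceil _
    have := Real.log_le_log (by positivity) h2
    linarith
  · filter_upwards [eventually_ge_atTop (1:ℝ)] with Q hQ
    have h2 : (⌈2*Q⌉₊ : ℝ) ≤ 2*Q + 1 := by
      have := Nat.ceil_lt_add_one (by linarith : (0:ℝ) ≤ 2*Q); linarith
    have := Real.log_le_log (by positivity) h2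
    linarith

lemma harmonic_floor_tendsto :
    Tendsto (fun Q : ℝ => (harmonic ⌊2*Q⌋₊ : ℝ) - Real.log Q) atTop
      (nhds (Real.eulerMascheroniConstant + Real.log 2)) := by
  have h2Q : Tendsto (fun Q : ℝ => 2*Q) atTop atTop := tendsto_id.const_mul_atTop two_pos
  have h1 : Tendsto (fun Q : ℝ => (harmonic ⌊2*Q⌋₊ : ℝ) - Real.log (⌊2*Q⌋₊ : ℝ)) atTop
      (nhds Real.eulerMascheroniConstant) :=
    Real.tendsto_harmonic_sub_log.comp (tendsto_nat_floor_atTop.comp h2Q)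
  have hsum := (h1.add log_floor_tendsto).add (tendsto_const_nhds (x := Real.log 2))
  rw [add_zero] at hsum
  apply hsum.congr'
  filter_upwards [eventually_ge_atTop (1:ℝ)] with Q hQ
  have hQ0 : (0:ℝ) < Q := by linarith
  have hlog : Real.log (2*Q) = Real.log 2 + Real.log Q := Real.log_mul two_ne_zero hQ0.ne'
  rw [hlog]; ring

lemma harmonic_ceil_tendsto :
    Tendsto (fun Q : ℝ => (harmonic ⌈2*Q⌉₊ : ℝ) - Real.log Q) atTop
      (nhds (Real.eulerMascheroniConstant + Real.log 2)) := by
  have h2Q : Tendsto (fun Q : ℝ => 2*Q) atTop atTop := tendsto_id.const_mul_atTop two_pos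
  have h1 : Tendsto (fun Q : ℝ => (harmonic ⌈2*Q⌉₊ : ℝ) - Real.log (⌈2*Q⌉₊ : ℝ)) atTop
      (nhds Real.eulerMascheroniConstant) :=
    Real.tendsto_harmonic_sub_log.comp (tendsto_nat_ceil_atTop.comp h2Q)
  have hsum := (h1.add log_ceil_tendsto).add (tendsto_const_nhds (x := Real.log 2))
  rw [add_zero] at hsum
  apply hsum.congr'
  filter_upwards [eventually_ge_atTop (1:ℝ)] with Q hQ
  have hQ0 : (0:ℝ) < Q := by linarith
  have hlog : Real.log (2*Q) = Real.log 2 + Real.log Q := Real.log_mul two_ne_zero hQ0.ne'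
  rw [hlog]; ring

set_option maxHeartbeats 1000000 in
theorem peak_density_constant :
    Filter.Tendsto
      (fun Q : ℝ =>
        (1 / π) * (∫ p in Set.Ioi (0 : ℝ), (1 - Real.exp (-2 * p * Q)) / (Real.exp p - 1))
          - Real.log Q / π)
      Filter.atTop
      (nhds ((Real.eulerMascheroniConstant + Real.log 2) / π)) := by
  have heq : ∀ Q : ℝ, (∫ p in Set.Ioi (0:ℝ), (1 - Real.exp (-2 * p * Q)) / (Real.exp p - 1))
      = ∫ p in Set.Ioi (0:ℝ), (1 - Real.exp (-((2*Q) * p))) / (Real.exp p - 1) := by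
    intro Q
    apply MeasureTheory.integral_congr_ae
    refine Filter.Eventually.of_forall fun p => ?_
    show (1 - Real.exp (-2 * p * Q)) / (Real.exp p - 1)
      = (1 - Real.exp (-((2*Q) * p))) / (Real.exp p - 1)
    rw [show -2 * p * Q = -((2*Q) * p) by ring]
  have key : Tendsto (fun Q : ℝ =>
      (∫ p in Set.Ioi (0:ℝ), (1 - Real.exp (-2 * p * Q)) / (Real.exp p - 1)) - Real.log Q)
      atTop (nhds (Real.eulerMascheroniConstant + Real.log 2)) := by
    refine tendsto_of_tendsto_of_tendsto_of_le_of_le' harmonic_floor_tendsto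
      harmonic_ceil_tendsto ?_ ?_
    · filter_upwards [eventually_ge_atTop (1:ℝ)] with Q hQ
      rw [heq]
      exact sub_le_sub_right (F_lower hQ) _
    · filter_upwards [eventually_ge_atTop (1:ℝ)] with Q hQ
      rw [heq]
      exact sub_le_sub_right (F_upper hQ) _
  have final := key.div_const π
  exact final.congr fun Q => by ring
end
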